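/- Assume 0 < a < b and let ω = √(b² − a²), σ = (1/ω)·arctanh(ω/b). Define G(t,s) = cosh(ω(s−t)) + (b/ω) sinh(ω(s−t)) for 0 ≤ s ≤ t, and G(t,s) = (a/ω) sinh(ω(s+t)) for −t ≤ s ≤ 0 (G = 0 elsewhere for t ≥ 0). Then G(t,s) ≥ 0 for all (t,s) ∈ [0, σ] × ℝ. -/
import Mathlib


/-- The inverse hyperbolic tangent. -/
noncomputable def arctanh (x : ℝ) : ℝ := (1 / 2) * Real.log ((1 + x) / (1 - x))

lemma sinh_arctanh (y : ℝ) (hy0 : 0 < y) (hy1 : y < 1) :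
    Real.sinh (arctanh y) = y * Real.cosh (arctanh y) := by
  set A := arctanh y with hA
  have hpos : (0:ℝ) < (1 + y) / (1 - y) := div_pos (by linarith) (by linarith)
  have he2 : Real.exp A ^ 2 = (1 + y) / (1 - y) := by
    rw [← Real.exp_nat_mul]
    rw [hA, arctanh]
    rw [show (2:ℕ) * ((1:ℝ)/2 * Real.log ((1 + y) / (1 - y))) =
        Real.log ((1 + y) / (1 - y)) by ring]
    exact Real.exp_log hpos
  have hepos : 0 < Real.exp A := Real.exp_pos A
  rw [Real.sinh_eq, Real.cosh_eq, Real.exp_neg]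
  have h1y : (1:ℝ) - y ≠ 0 := by linarith
  field_simp at he2 ⊢
  nlinarith [he2]

theorem GreenC2_nonneg (a b : ℝ) (ha : 0 < a) (hab : a < b)
    (ω σ : ℝ) (hω : ω = Real.sqrt (b^2 - a^2)) (hσ : σ = (1 / ω) * arctanh (ω / b))
    (G : ℝ → ℝ → ℝ)
    (hG : ∀ t s : ℝ, G t s =
      if 0 ≤ s ∧ s ≤ t then Real.cosh (ω * (s - t)) + (b / ω) * Real.sinh (ω * (s - t))
      else if -t ≤ s ∧ s ≤ 0 then (a / ω) * Real.sinh (ω * (s + t))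
      else 0) :
    ∀ t s : ℝ, 0 ≤ t → t ≤ σ → G t s ≥ 0 := by
  have hb : 0 < b := lt_trans ha hab
  have hd : 0 < b^2 - a^2 := by nlinarith
  have hω0 : 0 < ω := hω ▸ Real.sqrt_pos.mpr hd
  have hω2 : ω ^ 2 = b^2 - a^2 := by rw [hω]; exact Real.sq_sqrt hd.le
  have hωb : ω < b := by nlinarith
  have hy0 : 0 < ω / b := div_pos hω0 hb
  have hy1 : ω / b < 1 := (div_lt_one hb).mpr hωb
  set A := arctanh (ω / b) with hA
  have hkey : Real.sinh A = (ω / b) * Real.cosh A := sinh_arctanh _ hy0 hy1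
  have hbA : b * Real.sinh A = ω * Real.cosh A := by
    rw [hkey]; field_simp
  have hωσ : ω * σ = A := by rw [hσ]; field_simp
  intro t s ht htσ
  rw [hG]
  split_ifs with h1 h2
  · -- 0 ≤ s ≤ t
    set u := ω * (t - s) with hu
    have hu0 : 0 ≤ u := by
      have := h1.2
      nlinarith
    have huA : u ≤ A := by
      rw [← hωσ, hu]
      have := h1.1
      nlinarith
    have hst : ω * (s - t) = -u := by rw [hu]; ring
    rw [hst, Real.cosh_neg, Real.sinh_neg]
    have hsinh : 0 ≤ Real.sinh (A - u) := Real.sinh_nonneg_iff.mpr (by linarith)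
    rw [Real.sinh_sub] at hsinh
    have hcoshA : 0 < Real.cosh A := Real.cosh_pos A
    have h7 : b * Real.sinh A * Real.cosh u = ω * Real.cosh A * Real.cosh u := by
      rw [hbA]
    have h6 : 0 ≤ Real.cosh A * (ω * Real.cosh u - b * Real.sinh u) := by
      nlinarith [mul_nonneg hb.le hsinh, h7]
    have hmain : b * Real.sinh u ≤ ω * Real.cosh u := by
      nlinarith [h6, hcoshA]
    have : (b / ω) * Real.sinh u ≤ Real.cosh u := by
      rw [div_mul_eq_mul_div, div_le_iff₀ hω0]
      nlinarith
    linarith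
  · -- -t ≤ s ≤ 0
    have hst : 0 ≤ s + t := by linarith [h2.1]
    have : 0 ≤ Real.sinh (ω * (s + t)) := Real.sinh_nonneg_iff.mpr (by positivity)
    have haω : 0 ≤ a / ω := le_of_lt (div_pos ha hω0)
    positivity
  · exact le_refl 0
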